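/- arXiv:2511.21738 — 3 statements merged into one kernel-verified Lean document; each statement's English description precedes it below -/
import Mathlib

section
/- There exists a constant c > 0 such that for all sufficiently large n, the number of Boolean functions f : {0,1}^n → {0,1} that are computable by some Boolean circuit on n inputs over the basis {AND, OR, NOT} with at most c·2^n/n gates is less than (1/2)·2^{2^n}. In particular, at least half of all Boolean functions on n variables require circuits of size greater than c·2^n/n. -/
/-- A wire in a straight-line Boolean circuit: either one of the `n` input
variables or the output of one of the `k` previous gates. -/
inductive Wire (n k : ℕ) : Type where
  | input : Fin n → Wire n k
  | gate  : Fin k → Wire n k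

/-- A gate over the basis {AND, OR, NOT}, with inputs taken from wires. -/
inductive GateDesc (n k : ℕ) : Type where
  | not : Wire n k → GateDesc n k
  | and : Wire n k → Wire n k → GateDesc n k
  | or  : Wire n k → Wire n k → GateDesc n k

/-- A Boolean circuit on `n` inputs over {AND, OR, NOT}: a straight-line
program in which gate `i` may reference the inputs and gates `j < i`.
Its size is the number of gates. -/
structure Circuit (n : ℕ) : Type where
  size : ℕ
  gates : (i : Fin size) → GateDesc n i

def Wire.eval {n k : ℕ} (x : Fin n → Bool) (g : Fin k → Bool) : Wire n k → Bool
  | .input j => x j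
  | .gate j => g j

def GateDesc.eval {n k : ℕ} (x : Fin n → Bool) (g : Fin k → Bool) : GateDesc n k → Bool
  | .not w => !(w.eval x g)
  | .and w₁ w₂ => w₁.eval x g && w₂.eval x g
  | .or w₁ w₂ => w₁.eval x g || w₂.eval x g

/-- Value of gate `i` of the circuit on input `x`. -/
def Circuit.evalGate {n : ℕ} (c : Circuit n) (x : Fin n → Bool) : (i : ℕ) → i < c.size → Bool
  | i, hi => (c.gates ⟨i, hi⟩).eval x (fun j => c.evalGate x j (j.isLt.trans hi))

/-- The circuit `c` computes the Boolean function `f` if it has at least one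
gate and the value of the last gate on every input `x` equals `f x`. -/
def Circuit.Computes {n : ℕ} (c : Circuit n) (f : (Fin n → Bool) → Bool) : Prop :=
  ∃ h : 0 < c.size, ∀ x : Fin n → Bool,
    c.evalGate x (c.size - 1) (Nat.sub_lt h Nat.one_pos) = f x

/-!
Shannon's counting argument. A circuit with at most `s` gates is determined by its size `k ≤ s`
and its `k` gate descriptions, each chosen among at most `3 (n + s)²` possibilities, so at most
`(s + 1) (3 (n + s)²)^s` functions are computable with `s` gates. For `s ≈ 2ⁿ / (16 n)` this is
`2^(O(n s)) ≤ 2^(2ⁿ) / 4`, and the functions that are not computable with `s` gates form the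
complement of those that are.
-/

def Wire.equivSum (n k : ℕ) : Wire n k ≃ Fin n ⊕ Fin k where
  toFun
    | .input j => .inl j
    | .gate j => .inr j
  invFun
    | .inl j => .input j
    | .inr j => .gate j
  left_inv w := by cases w <;> rfl
  right_inv w := by cases w <;> rfl

def GateDesc.equivSum (n k : ℕ) :
    GateDesc n k ≃ Wire n k ⊕ (Wire n k × Wire n k ⊕ Wire n k × Wire n k) where
  toFun
    | .not w => .inl w
    | .and a b => .inr (.inl (a, b))
    | .or a b => .inr (.inr (a, b))
  invFun
    | .inl w => .not w
    | .inr (.inl (a, b)) => .and a b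
    | .inr (.inr (a, b)) => .or a b
  left_inv g := by cases g <;> rfl
  right_inv g := by rcases g with w | ⟨a, b⟩ | ⟨a, b⟩ <;> rfl

instance (n k : ℕ) : Fintype (Wire n k) := Fintype.ofEquiv _ (Wire.equivSum n k).symm

instance (n k : ℕ) : Fintype (GateDesc n k) := Fintype.ofEquiv _ (GateDesc.equivSum n k).symm

theorem Wire.card (n k : ℕ) : Fintype.card (Wire n k) = n + k := by
  simp [Fintype.card_congr (Wire.equivSum n k)]

theorem GateDesc.card (n k : ℕ) : Fintype.card (GateDesc n k) = (n + k) + 2 * (n + k) ^ 2 := by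
  simp only [Fintype.card_congr (GateDesc.equivSum n k), Fintype.card_sum, Fintype.card_prod,
    Wire.card]
  ring

theorem GateDesc.card_le {n k s : ℕ} (hk : k ≤ s) :
    Fintype.card (GateDesc n k) ≤ 3 * (n + s) ^ 2 := by
  have : n + k ≤ (n + k) ^ 2 := Nat.le_self_pow two_ne_zero _
  have : (n + k) ^ 2 ≤ (n + s) ^ 2 := by gcongr
  rw [GateDesc.card]
  omega

/-- Circuits with at most `s` gates, encoded as a size `k ≤ s` and a list of `k` gates. -/
abbrev CircuitCode (n s : ℕ) : Type := Σ k : Fin (s + 1), (i : Fin k) → GateDesc n i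

theorem CircuitCode.card_le {n : ℕ} (s : ℕ) (hn : 0 < n) :
    Fintype.card (CircuitCode n s) ≤ (s + 1) * (3 * (n + s) ^ 2) ^ s := by
  have hB : 1 ≤ 3 * (n + s) ^ 2 := by
    have : 1 ≤ (n + s) ^ 2 := Nat.one_le_pow _ _ (by omega)
    omega
  have hterm (k : Fin (s + 1)) :
      Fintype.card ((i : Fin k) → GateDesc n i) ≤ (3 * (n + s) ^ 2) ^ s :=
    calc Fintype.card ((i : Fin k) → GateDesc n i)
        = ∏ i : Fin k, Fintype.card (GateDesc n i) := Fintype.card_pi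
      _ ≤ ∏ _i : Fin k, 3 * (n + s) ^ 2 :=
          Finset.prod_le_prod' fun i _ => GateDesc.card_le (by omega)
      _ = (3 * (n + s) ^ 2) ^ (k : ℕ) := by simp
      _ ≤ (3 * (n + s) ^ 2) ^ s := Nat.pow_le_pow_right hB (by omega)
  calc Fintype.card (CircuitCode n s)
      = ∑ k : Fin (s + 1), Fintype.card ((i : Fin k) → GateDesc n i) := Fintype.card_sigma
    _ ≤ ∑ _k : Fin (s + 1), (3 * (n + s) ^ 2) ^ s := Finset.sum_le_sum fun k _ => hterm k
    _ = (s + 1) * (3 * (n + s) ^ 2) ^ s := by simp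

/-- The value of the last gate, with the junk value `false` for the empty circuit. -/
def Circuit.output {n : ℕ} (C : Circuit n) (x : Fin n → Bool) : Bool :=
  if h : 0 < C.size then C.evalGate x (C.size - 1) (Nat.sub_lt h Nat.one_pos) else false

theorem Circuit.output_eq_of_computes {n : ℕ} {C : Circuit n} {f : (Fin n → Bool) → Bool}
    (h : C.Computes f) : C.output = f := by
  obtain ⟨hpos, hval⟩ := h
  funext x
  simp only [Circuit.output, dif_pos hpos, hval]

theorem Circuit.card_computable_le {n : ℕ} (b : ℝ) (hn : 0 < n) :
    Nat.card {f : (Fin n → Bool) → Bool | ∃ C : Circuit n, (C.size : ℝ) ≤ b ∧ C.Computes f}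
      ≤ (⌊b⌋₊ + 1) * (3 * (n + ⌊b⌋₊) ^ 2) ^ ⌊b⌋₊ := by
  let decode (p : CircuitCode n ⌊b⌋₊) : (Fin n → Bool) → Bool := Circuit.output ⟨p.1, p.2⟩
  have hsub : {f | ∃ C : Circuit n, (C.size : ℝ) ≤ b ∧ C.Computes f} ⊆ Set.range decode := by
    rintro f ⟨C, hsize, hC⟩
    exact ⟨⟨⟨C.size, Nat.lt_succ_of_le (Nat.le_floor hsize)⟩, C.gates⟩,
      Circuit.output_eq_of_computes hC⟩
  calc _ ≤ Nat.card (Set.range decode) := Nat.card_mono (Set.toFinite _) hsub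
    _ ≤ Nat.card (CircuitCode n ⌊b⌋₊) := Finite.card_range_le _
    _ = Fintype.card (CircuitCode n ⌊b⌋₊) := Nat.card_eq_fintype_card
    _ ≤ _ := CircuitCode.card_le _ hn

theorem four_mul_succ_mul_pow_le_two_pow_two_pow {n s : ℕ} (hn : 4 ≤ n)
    (hs : 16 * n * s ≤ 2 ^ n) :
    4 * ((s + 1) * (3 * (n + s) ^ 2) ^ s) ≤ 2 ^ 2 ^ n := by
  rw [mul_assoc] at hs
  have hn2 : n < 2 ^ n := Nat.lt_two_pow_self
  have : s ≤ n * s := Nat.le_mul_of_pos_left s (by omega)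
  have hsum : n + s ≤ 2 ^ (n + 1) := by rw [pow_succ]; omega
  have hbase : 3 * (n + s) ^ 2 ≤ 2 ^ (3 * n) :=
    calc 3 * (n + s) ^ 2 ≤ 4 * (2 ^ (n + 1)) ^ 2 := by gcongr; omega
      _ = 2 ^ (2 * n + 4) := by ring
      _ ≤ 2 ^ (3 * n) := Nat.pow_le_pow_right two_pos (by omega)
  -- `2 ^ n ≥ 16 (n - 3)` is the linear growth that makes the exponent fit
  have hlin : n - 4 < 2 ^ (n - 4) := Nat.lt_two_pow_self
  have hsplit : 2 ^ n = 16 * 2 ^ (n - 4) := by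
    rw [show 16 = 2 ^ 4 by rfl, ← pow_add]; congr 1; omega
  have hexp : 2 + n + 3 * (n * s) ≤ 2 ^ n := by omega
  calc 4 * ((s + 1) * (3 * (n + s) ^ 2) ^ s)
      ≤ 2 ^ 2 * (2 ^ n * (2 ^ (3 * n)) ^ s) := by gcongr <;> omega
    _ = 2 ^ (2 + n + 3 * (n * s)) := by ring
    _ ≤ 2 ^ 2 ^ n := Nat.pow_le_pow_right two_pos hexp

theorem Circuit.setOf_forall_computes_lt_eq_compl (n : ℕ) (b : ℝ) :
    {f : (Fin n → Bool) → Bool | ∀ C : Circuit n, C.Computes f → b < (C.size : ℝ)}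
      = {f | ∃ C : Circuit n, (C.size : ℝ) ≤ b ∧ C.Computes f}ᶜ := by
  ext f
  simp only [Set.mem_ofPred_eq, Set.mem_compl_iff, not_exists, not_and', not_le]

theorem Set.card_lt_half_and_half_le_card_compl {α : Type*} [Finite α] (S : Set α)
    (h : 2 * Nat.card S < Nat.card α) :
    (Nat.card S : ℝ) < 1 / 2 * Nat.card α ∧ 1 / 2 * (Nat.card α : ℝ) ≤ Nat.card ↥Sᶜ := by
  have htotal : Nat.card S + Nat.card ↥Sᶜ = Nat.card α := by
    simpa only [Nat.card_coe_set_eq] using Set.ncard_add_ncard_compl S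
  have hreal : (Nat.card S : ℝ) + Nat.card ↥Sᶜ = Nat.card α := by exact_mod_cast htotal
  have hlt : (2 * Nat.card S : ℝ) < Nat.card α := by exact_mod_cast h
  constructor <;> linarith

theorem stmt_0 :
    ∃ c : ℝ, 0 < c ∧ ∃ N : ℕ, ∀ n : ℕ, N ≤ n →
      (Nat.card {f : (Fin n → Bool) → Bool |
          ∃ C : Circuit n, (C.size : ℝ) ≤ c * 2 ^ n / n ∧ C.Computes f} : ℝ)
        < (1 / 2) * 2 ^ (2 ^ n) ∧
      (1 / 2) * (2 : ℝ) ^ (2 ^ n) ≤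
        (Nat.card {f : (Fin n → Bool) → Bool |
          ∀ C : Circuit n, C.Computes f → c * 2 ^ n / n < (C.size : ℝ)} : ℝ) := by
  refine ⟨1 / 16, by norm_num, 4, fun n hn => ?_⟩
  have hcount := Circuit.card_computable_le (1 / 16 * 2 ^ n / n) (show 0 < n by omega)
  set s := ⌊(1 / 16 : ℝ) * 2 ^ n / n⌋₊
  have hs : 16 * n * s ≤ 2 ^ n := by
    have hfloor := Nat.floor_le (by positivity : (0 : ℝ) ≤ 1 / 16 * 2 ^ n / n)
    rw [le_div_iff₀ (by positivity)] at hfloor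
    exact_mod_cast (by linarith : (16 * n * s : ℝ) ≤ 2 ^ n)
  have hcard : Nat.card ((Fin n → Bool) → Bool) = 2 ^ 2 ^ n := by simp
  have hfew : 2 * Nat.card {f : (Fin n → Bool) → Bool |
      ∃ C : Circuit n, (C.size : ℝ) ≤ 1 / 16 * 2 ^ n / n ∧ C.Computes f}
      < Nat.card ((Fin n → Bool) → Bool) := by
    have harith := four_mul_succ_mul_pow_le_two_pow_two_pow hn hs
    have : 0 < 2 ^ 2 ^ n := by positivity
    omega
  have hhalf := Set.card_lt_half_and_half_le_card_compl _ hfew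
  rwa [← Circuit.setOf_forall_computes_lt_eq_compl, hcard, Nat.cast_pow,
    Nat.cast_ofNat] at hhalf
end

section
/- Let S be a finite set with |S| = N ≥ 1 and let c be an injective map from S into the set of binary strings. Then the total length satisfies Σ_{x ∈ S} length(c(x)) ≥ N · (log₂(N+1) − 2); equivalently, the average code length under the uniform distribution on S is at least log₂(N+1) − 2. -/
/-!
At most `2 ^ (t + 1) - 1` binary strings have length `≤ t`, so at least `N + 1 - 2 ^ (t + 1)`
codewords are longer than `t`. Summing over `t < K` gives
`∑ length ≥ K (N + 1) - 2 ^ (K + 1) + 2`. Take `K = ⌊x⌋` with `x = log₂ (N + 1)`: Bernoulli's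
inequality `2 ^ u ≤ 1 + u` for `u = K + 1 - x ∈ [0, 1]` gives `2 ^ (K + 1) ≤ (N + 1) (2 + K - x)`,
and the claim follows.
-/

open Finset

theorem sum_min_succ_eq_sum_min_add_card {ι : Type*} (s : Finset ι) (f : ι → ℕ) (K : ℕ) :
    ∑ x ∈ s, min (f x) (K + 1) = ∑ x ∈ s, min (f x) K + #{x ∈ s | K < f x} := by
  rw [card_filter, ← sum_add_distrib]
  refine sum_congr rfl fun x _ => ?_
  split_ifs <;> omega

section Counting

variable (T : Finset (List Bool))

theorem card_filter_length_le_add_one_le (t : ℕ) :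
    #{l ∈ T | l.length ≤ t} + 1 ≤ 2 ^ (t + 1) := by
  have hfibres : ∑ n ∈ range (t + 1), #{l ∈ T | l.length = n} = #{l ∈ T | l.length ≤ t} := by
    rw [sum_card_fiberwise_eq_card_filter]
    simp only [mem_range, Nat.lt_succ_iff]
  have hgeom : ∑ n ∈ range (t + 1), 2 ^ n + 1 = 2 ^ (t + 1) := by
    rw [Nat.geomSum_eq le_rfl]
    have := Nat.one_le_two_pow (n := t + 1)
    omega
  rw [← hfibres, ← hgeom]
  gcongr with n
  simpa using card_filter_length_eq_le (T := T) (s := n)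

theorem mul_card_add_two_le_sum_min_length_add_two_pow (K : ℕ) :
    K * (#T + 1) + 2 ≤ ∑ l ∈ T, min l.length K + 2 ^ (K + 1) := by
  induction K with
  | zero => simp
  | succ K ih =>
    have hlong : #T + 1 ≤ #{l ∈ T | K < l.length} + 2 ^ (K + 1) := by
      have hsplit := card_filter_add_card_filter_not (s := T) (fun l => l.length ≤ K)
      have hshort := card_filter_length_le_add_one_le T K
      simp only [not_le] at hsplit
      omega
    rw [sum_min_succ_eq_sum_min_add_card, pow_succ]
    linarith

theorem mul_card_add_two_le_sum_length_add_two_pow (K : ℕ) :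
    K * (#T + 1) + 2 ≤ ∑ l ∈ T, l.length + 2 ^ (K + 1) :=
  (mul_card_add_two_le_sum_min_length_add_two_pow T K).trans <| by
    gcongr with l
    exact min_le_left _ _

end Counting

theorem two_pow_succ_le_rpow_mul {K : ℕ} {x : ℝ} (hK : K ≤ x) (hx : x ≤ K + 1) :
    (2 : ℝ) ^ (K + 1) ≤ 2 ^ x * (2 + K - x) := by
  have hsplit : (2 : ℝ) ^ (K + 1) = 2 ^ x * 2 ^ (K + 1 - x) := by
    rw [← Real.rpow_add two_pos, add_sub_cancel, ← Real.rpow_natCast]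
    push_cast
    ring_nf
  have hbernoulli : (2 : ℝ) ^ (K + 1 - x) ≤ 1 + (K + 1 - x) := by
    simpa [one_add_one_eq_two] using
      rpow_one_add_le_one_add_mul_self (s := 1) (by norm_num) (sub_nonneg.2 hx)
        (by linarith)
  rw [hsplit]
  gcongr
  linarith

theorem stmt_6_general {S : Type*} [Fintype S] (N : ℕ)
    (hcard : Fintype.card S = N) (c : S → List Bool) (hc : Function.Injective c) :
    (N : ℝ) * (Real.logb 2 (N + 1) - 2) ≤ ∑ x : S, ((c x).length : ℝ) := by
  set x := Real.logb 2 (N + 1)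
  have hx : 0 ≤ x := Real.logb_nonneg one_lt_two (by simp)
  have hpow : (2 : ℝ) ^ x = N + 1 := Real.rpow_logb two_pos (by norm_num) (by positivity)
  set K := ⌊x⌋₊
  have hcount : (K * (N + 1) + 2 : ℝ) ≤ ∑ y, ((c y).length : ℝ) + 2 ^ (K + 1) := by
    have h := mul_card_add_two_le_sum_length_add_two_pow (univ.image c) K
    rw [card_image_of_injective _ hc, card_univ, hcard, sum_image hc.injOn] at h
    exact_mod_cast h
  have hbound := two_pow_succ_le_rpow_mul (Nat.floor_le hx) (Nat.lt_floor_add_one x).le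
  rw [hpow] at hbound
  linarith

theorem stmt_6 {S : Type*} [Fintype S] (N : ℕ) (hN : 1 ≤ N)
    (hcard : Fintype.card S = N) (c : S → List Bool) (hc : Function.Injective c) :
    (N : ℝ) * (Real.logb 2 (N + 1) - 2) ≤ ∑ x : S, ((c x).length : ℝ) :=
  stmt_6_general N hcard c hc
end

section
/- Lupanov's upper bound: for every real ε > 0 there exists a natural number N such that for all n ≥ N, every Boolean function f : {0,1}^n → {0,1} is computable by a Boolean circuit on n inputs over the basis {AND, OR, NOT} with at most (1 + ε)·2^n/n gates. -/
open Finset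

namespace Wire

def castLE {n k k' : ℕ} (h : k ≤ k') : Wire n k → Wire n k'
  | .input j => .input j
  | .gate j => .gate (Fin.castLE h j)

lemma eval_castLE {n k k' : ℕ} (h : k ≤ k') (x : Fin n → Bool) (g : Fin k' → Bool)
    (w : Wire n k) : (w.castLE h).eval x g = w.eval x (g ∘ Fin.castLE h) := by
  cases w <;> rfl

end Wire

namespace GateDesc

def castLE {n k k' : ℕ} (h : k ≤ k') : GateDesc n k → GateDesc n k'
  | .not w => .not (w.castLE h)
  | .and w₁ w₂ => .and (w₁.castLE h) (w₂.castLE h)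
  | .or w₁ w₂ => .or (w₁.castLE h) (w₂.castLE h)

lemma eval_castLE {n k k' : ℕ} (h : k ≤ k') (x : Fin n → Bool) (g : Fin k' → Bool)
    (d : GateDesc n k) : (d.castLE h).eval x g = d.eval x (g ∘ Fin.castLE h) := by
  cases d <;> simp only [castLE, eval, Wire.eval_castLE]

end GateDesc

namespace Circuit

variable {n : ℕ}

def empty : Circuit n := ⟨0, fun i => i.elim0⟩

def gateVals (c : Circuit n) (x : Fin n → Bool) (j : Fin c.size) : Bool :=
  c.evalGate x j j.isLt

lemma evalGate_eq (c : Circuit n) (x : Fin n → Bool) (i : ℕ) (hi : i < c.size) :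
    c.evalGate x i hi = (c.gates ⟨i, hi⟩).eval x (c.gateVals x ∘ Fin.castLE hi.le) := by
  rw [evalGate]; rfl

instance : Preorder (Circuit n) where
  le c c' := c.size ≤ c'.size ∧
    ∀ x i (h : i < c.size) (h' : i < c'.size), c'.evalGate x i h' = c.evalGate x i h
  le_refl _ := ⟨le_rfl, fun _ _ _ _ => rfl⟩
  le_trans _ _ _ h₁ h₂ :=
    ⟨h₁.1.trans h₂.1, fun x i h h' => (h₂.2 x i (h.trans_le h₁.1) h').trans (h₁.2 x i h _)⟩

lemma gateVals_castLE {c c' : Circuit n} (hc : c ≤ c') (x : Fin n → Bool) :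
    c'.gateVals x ∘ Fin.castLE hc.1 = c.gateVals x :=
  funext fun j => hc.2 x j j.isLt _

def snoc (c : Circuit n) (d : GateDesc n c.size) : Circuit n where
  size := c.size + 1
  gates i := if h : (i : ℕ) < c.size then c.gates ⟨i, h⟩ else d.castLE (Nat.le_of_not_lt h)

lemma le_snoc (c : Circuit n) (d : GateDesc n c.size) : c ≤ c.snoc d := by
  refine ⟨Nat.le_succ _, fun x i => ?_⟩
  induction i using Nat.strong_induction_on with
  | _ i ih =>
    intro h h'
    rw [evalGate_eq, evalGate_eq]
    simp only [snoc, h, dif_pos]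
    congr 1
    funext j
    exact ih j j.isLt (j.isLt.trans h) _

lemma gateVals_snoc_last (c : Circuit n) (d : GateDesc n c.size) (x : Fin n → Bool) :
    (c.snoc d).gateVals x (Fin.last c.size) = d.eval x (c.gateVals x) := by
  unfold gateVals
  rw [evalGate_eq]
  simp only [snoc, Fin.val_last, lt_irrefl, dif_neg, not_false_eq_true, GateDesc.eval_castLE]
  congr 1
  funext j
  exact (le_snoc c d).2 x j j.isLt _

variable {c c' : Circuit n} {φ ψ : (Fin n → Bool) → Bool}

def Provides (c : Circuit n) (φ : (Fin n → Bool) → Bool) : Prop :=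
  ∃ w : Wire n c.size, ∀ x, w.eval x (c.gateVals x) = φ x

lemma provides_input (c : Circuit n) (j : Fin n) : c.Provides (· j) :=
  ⟨.input j, fun _ => rfl⟩

lemma provides_snoc (c : Circuit n) (d : GateDesc n c.size) :
    (c.snoc d).Provides fun x => d.eval x (c.gateVals x) :=
  ⟨.gate (Fin.last c.size), fun x => gateVals_snoc_last c d x⟩

lemma Provides.mono (h : c.Provides φ) (hc : c ≤ c') : c'.Provides φ := by
  obtain ⟨w, hw⟩ := h
  exact ⟨w.castLE hc.1, fun x => by rw [Wire.eval_castLE, gateVals_castLE hc, hw]⟩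

lemma Provides.congr (h : c.Provides φ) (hφ : ∀ x, φ x = ψ x) : c.Provides ψ :=
  funext hφ ▸ h

lemma Provides.exists_computes (h : c.Provides φ) :
    ∃ C : Circuit n, C.Computes φ ∧ C.size ≤ c.size + 1 := by
  obtain ⟨w, hw⟩ := h
  refine ⟨c.snoc (.and w w), ⟨c.size.succ_pos, fun x => ?_⟩, le_rfl⟩
  exact (gateVals_snoc_last c _ x).trans (by simp [GateDesc.eval, hw])

def ExtendsWithin (c : Circuit n) (m : ℕ) (P : Circuit n → Prop) : Prop :=
  ∃ c', c ≤ c' ∧ c'.size ≤ c.size + m ∧ P c'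

lemma extendsWithin_zero {P : Circuit n → Prop} (h : P c) : c.ExtendsWithin 0 P :=
  ⟨c, le_rfl, le_rfl, h⟩

lemma ExtendsWithin.mono {m m' : ℕ} {P Q : Circuit n → Prop} (h : c.ExtendsWithin m P)
    (hm : m ≤ m') (hPQ : ∀ c', c ≤ c' → P c' → Q c') : c.ExtendsWithin m' Q := by
  obtain ⟨c', hc, hsize, hP⟩ := h
  exact ⟨c', hc, by omega, hPQ c' hc hP⟩

lemma ExtendsWithin.congr {m : ℕ} (h : c.ExtendsWithin m (·.Provides φ)) (hφ : ∀ x, φ x = ψ x) :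
    c.ExtendsWithin m (·.Provides ψ) :=
  h.mono le_rfl fun _ _ h' => h'.congr hφ

lemma ExtendsWithin.bind {a b : ℕ} {P Q : Circuit n → Prop} (h : c.ExtendsWithin a P)
    (next : ∀ c', c ≤ c' → P c' → c'.ExtendsWithin b Q) : c.ExtendsWithin (a + b) Q := by
  obtain ⟨c₁, hc₁, hsize₁, hP⟩ := h
  obtain ⟨c₂, hc₂, hsize₂, hQ⟩ := next c₁ hc₁ hP
  exact ⟨c₂, hc₁.trans hc₂, by omega, hQ⟩

lemma extendsWithin_gate (c : Circuit n) (d : GateDesc n c.size) :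
    c.ExtendsWithin 1 (·.Provides fun x => d.eval x (c.gateVals x)) :=
  ⟨c.snoc d, le_snoc c d, le_rfl, provides_snoc c d⟩

lemma Provides.extendsWithin_not (h : c.Provides φ) :
    c.ExtendsWithin 1 (·.Provides fun x => !φ x) := by
  obtain ⟨w, hw⟩ := h
  exact (extendsWithin_gate c (.not w)).congr fun x => by simp [GateDesc.eval, hw]

lemma Provides.extendsWithin_and (h₁ : c.Provides φ) (h₂ : c.Provides ψ) :
    c.ExtendsWithin 1 (·.Provides fun x => φ x && ψ x) := by
  obtain ⟨w₁, hw₁⟩ := h₁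
  obtain ⟨w₂, hw₂⟩ := h₂
  exact (extendsWithin_gate c (.and w₁ w₂)).congr fun x => by simp [GateDesc.eval, hw₁, hw₂]

lemma Provides.extendsWithin_or (h₁ : c.Provides φ) (h₂ : c.Provides ψ) :
    c.ExtendsWithin 1 (·.Provides fun x => φ x || ψ x) := by
  obtain ⟨w₁, hw₁⟩ := h₁
  obtain ⟨w₂, hw₂⟩ := h₂
  exact (extendsWithin_gate c (.or w₁ w₂)).congr fun x => by simp [GateDesc.eval, hw₁, hw₂]

lemma extendsWithin_false (hn : 0 < n) (c : Circuit n) :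
    c.ExtendsWithin 2 (·.Provides fun _ => false) :=
  let x₀ := c.provides_input ⟨0, hn⟩
  x₀.extendsWithin_not.bind fun _ hc h => (x₀.mono hc).extendsWithin_and h |>.congr fun x => by simp

lemma extendsWithin_literal (c : Circuit n) (j : Fin n) (b : Bool) :
    c.ExtendsWithin 1 (·.Provides fun x => x j ^^ b) := by
  cases b
  · exact (extendsWithin_zero (P := (·.Provides _)) (c.provides_input j)).congr (by simp)
      |>.mono zero_le_one fun _ _ => id
  · exact (c.provides_input j).extendsWithin_not.congr (by simp)

lemma extendsWithin_any {ι : Type*} [DecidableEq ι] (hfalse : c.Provides fun _ => false)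
    (S : Finset ι) (F : ι → (Fin n → Bool) → Bool) (hF : ∀ i ∈ S, c.Provides (F i)) :
    c.ExtendsWithin #S (·.Provides fun x => decide (∃ i ∈ S, F i x)) := by
  induction S using Finset.induction_on with
  | empty => exact (extendsWithin_zero (P := (·.Provides _)) hfalse).congr (by simp)
  | insert i S hi ih =>
    rw [card_insert_of_notMem hi]
    refine (ih fun j hj => hF j (mem_insert_of_mem hj)).bind fun c' hc h => ?_
    exact ((hF i (mem_insert_self i S)).mono hc).extendsWithin_or h |>.congr (by simp)

lemma extendsWithin_forall {ι : Type*} [DecidableEq ι] (S : Finset ι) (cost : ι → ℕ)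
    (F : ι → (Fin n → Bool) → Bool)
    (hF : ∀ i ∈ S, ∀ c', c ≤ c' → c'.ExtendsWithin (cost i) (·.Provides (F i))) :
    c.ExtendsWithin (∑ i ∈ S, cost i) fun c' => ∀ i ∈ S, c'.Provides (F i) := by
  induction S using Finset.induction_on generalizing c with
  | empty => exact extendsWithin_zero (by simp)
  | insert i S hi ih =>
    rw [sum_insert hi]
    refine (hF i (mem_insert_self i S) c le_rfl).bind fun c₁ hc₁ hi₁ => ?_
    refine (ih fun j hj c' hc' => hF j (mem_insert_of_mem hj) c' (hc₁.trans hc')).mono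
      le_rfl fun c₂ hc₂ h₂ => ?_
    simpa [hi₁.mono hc₂] using h₂

lemma extendsWithin_minterm (hfalse : c.Provides fun _ => false) {r : ℕ} (e : Fin r → Fin n)
    (a : Fin r → Bool) : c.ExtendsWithin (2 * r + 1) (·.Provides fun x => decide (x ∘ e = a)) := by
  have literals := extendsWithin_forall (c := c) univ (fun _ => 1)
    (fun i x => x (e i) ^^ a i) fun i _ c' _ => extendsWithin_literal c' (e i) (a i)
  -- `x ∘ e = a` iff none of the literals `x (e i) ≠ a i` holds
  refine (literals.bind fun c₁ hc₁ h₁ =>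
    (extendsWithin_any (hfalse.mono hc₁) univ _ h₁).bind fun _ _ h₂ =>
      h₂.extendsWithin_not).mono (by simp; omega) fun _ _ h => h.congr fun x => ?_
  simp [funext_iff, ← decide_not]

lemma extendsWithin_minterms (hfalse : c.Provides fun _ => false) {r : ℕ} (e : Fin r → Fin n) :
    c.ExtendsWithin ((2 * r + 1) * 2 ^ r) fun c' =>
      ∀ a : Fin r → Bool, c'.Provides fun x => decide (x ∘ e = a) :=
  (extendsWithin_forall univ _ _ fun a _ _ hc => extendsWithin_minterm (hfalse.mono hc) e a
    ).mono (by simp [mul_comm]) fun _ _ h a => h a (mem_univ a)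

lemma extendsWithin_mem {ι : Type*} [DecidableEq ι] (hfalse : c.Provides fun _ => false)
    {g : (Fin n → Bool) → ι} (hg : ∀ i, c.Provides fun x => decide (g x = i)) (A : Finset ι) :
    c.ExtendsWithin #A (·.Provides fun x => decide (g x ∈ A)) :=
  (extendsWithin_any hfalse A _ fun i _ => hg i).congr fun x => by simp

end Circuit

section StripPatterns

lemma exists_strips_card_le (α : Type*) [Fintype α] {s : ℕ} (hs : 0 < s) :
    ∃ strip : α → ℕ, (∀ a, strip a < Fintype.card α / s + 1) ∧ ∀ t, #{a | strip a = t} ≤ s := by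
  let e := Fintype.equivFin α
  refine ⟨fun a => e a / s, fun a => Nat.lt_succ_of_le (Nat.div_le_div_right (e a).isLt.le),
    fun t => ?_⟩
  -- within a strip, `e a` is determined by its remainder mod `s`
  calc #{a | (e a : ℕ) / s = t} ≤ #(range s) := by
        refine card_le_card_of_injOn (fun a => (e a : ℕ) % s)
          (fun a _ => mem_range.2 (Nat.mod_lt _ hs)) fun a ha a' ha' h => e.injective ?_
        simp only [mem_coe, mem_filter, mem_univ, true_and] at ha ha'
        rw [Fin.ext_iff, ← Nat.div_add_mod (e a) s, ← Nat.div_add_mod (e a') s, ha, ha']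
        exact congrArg _ h
    _ = s := card_range s

variable {α β : Type*} [Fintype α] (strip : α → ℕ) (F : α → β → Bool)

def stripPattern (t : ℕ) (b : β) : Finset α := {a | strip a = t ∧ F a b}

lemma stripPattern_subset (t : ℕ) (b : β) :
    stripPattern strip F t b ⊆ ({a | strip a = t} : Finset α) :=
  monotone_filter_right _ fun _ _ => And.left

variable [Fintype β] [DecidableEq α]

def stripPatterns (t : ℕ) : Finset (Finset α) := univ.image (stripPattern strip F t)

variable {strip F}

lemma card_le_of_mem_stripPatterns {t s : ℕ} (hs : #{a | strip a = t} ≤ s) {K : Finset α}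
    (hK : K ∈ stripPatterns strip F t) : #K ≤ s := by
  obtain ⟨b, -, rfl⟩ := mem_image.1 hK
  exact (card_le_card (stripPattern_subset strip F t b)).trans hs

lemma card_stripPatterns_le {t s : ℕ} (hs : #{a | strip a = t} ≤ s) :
    #(stripPatterns strip F t) ≤ 2 ^ s :=
  calc #(stripPatterns strip F t) ≤ #(({a | strip a = t} : Finset α).powerset) :=
        card_le_card <| image_subset_iff.2 fun b _ =>
          mem_powerset.2 (stripPattern_subset strip F t b)
    _ ≤ 2 ^ s := by rw [card_powerset]; exact Nat.pow_le_pow_right two_pos hs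

lemma sum_card_stripPattern_eq (t : ℕ) :
    ∑ K ∈ stripPatterns strip F t, #{b | stripPattern strip F t b = K} = Fintype.card β :=
  (card_eq_sum_card_image _ univ).symm

lemma exists_stripPattern_iff {T : Finset ℕ} (hT : ∀ a, strip a ∈ T) (a : α) (b : β) :
    (∃ t ∈ T, ∃ K ∈ stripPatterns strip F t, a ∈ K ∧ stripPattern strip F t b = K) ↔ F a b := by
  constructor
  · rintro ⟨t, -, _, -, ha, rfl⟩
    exact (mem_filter.1 ha).2.2
  · intro h
    exact ⟨strip a, hT a, _, mem_image_of_mem _ (mem_univ b), by simp [stripPattern, h], rfl⟩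

end StripPatterns

-- every gate of the construction except the `(2 ^ k / s) * 2 ^ m` column-minterm ORs of the
-- first `2 ^ k / s` strips
def lupanovOverhead (k m s : ℕ) : ℕ :=
  (2 * k + 1) * 2 ^ k + (2 * m + 2) * 2 ^ m + (2 ^ k / s + 1) * (2 ^ s * (s + 2) + 1) + 3

namespace Circuit

variable {n : ℕ} {c : Circuit n}

lemma extendsWithin_strip {α β : Type*} [Fintype α] [Fintype β] [DecidableEq α] [DecidableEq β]
    {strip : α → ℕ} {F : α → β → Bool} {t s : ℕ} (hs : #{a | strip a = t} ≤ s)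
    {row : (Fin n → Bool) → α} {col : (Fin n → Bool) → β} (hfalse : c.Provides fun _ => false)
    (hrow : ∀ a, c.Provides fun x => decide (row x = a))
    (hcol : ∀ b, c.Provides fun x => decide (col x = b)) :
    c.ExtendsWithin (2 ^ s * (s + 2) + Fintype.card β) (·.Provides fun x =>
      decide (∃ K ∈ stripPatterns strip F t, row x ∈ K ∧ stripPattern strip F t (col x) = K)) := by
  have hK : ∀ K ∈ stripPatterns strip F t, ∀ c', c ≤ c' →
      c'.ExtendsWithin (s + (#{b | stripPattern strip F t b = K} + 1)) (·.Provides fun x =>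
        decide (row x ∈ K) &&
          decide (col x ∈ ({b | stripPattern strip F t b = K} : Finset β))) := by
    intro K hK c' hc
    refine ((extendsWithin_mem (hfalse.mono hc) (fun a => (hrow a).mono hc) K).mono
      (card_le_of_mem_stripPatterns hs hK) fun _ _ => id).bind fun c₁ hc₁ h₁ => ?_
    exact (extendsWithin_mem (hfalse.mono (hc.trans hc₁)) (fun b => (hcol b).mono (hc.trans hc₁))
      _).bind fun _ hc₂ h₂ => (h₁.mono hc₂).extendsWithin_and h₂
  refine ((extendsWithin_forall _ _ _ hK).bind fun c' hc h => extendsWithin_any (hfalse.mono hc)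
    _ _ h).mono ?_ fun _ _ h => h.congr fun x => by simp
  rw [sum_add_distrib, sum_add_distrib, sum_card_stripPattern_eq]
  simp only [sum_const, smul_eq_mul, mul_one]
  have := card_stripPatterns_le (F := F) hs
  nlinarith

theorem exists_computes_size_le {k s : ℕ} (hk : k ≤ n) (hs : 0 < s) (hn : 0 < n)
    (f : (Fin n → Bool) → Bool) :
    ∃ C : Circuit n, C.Computes f ∧
      C.size ≤ 2 ^ k / s * 2 ^ (n - k) + lupanovOverhead k (n - k) s := by
  obtain ⟨m, rfl⟩ := Nat.exists_eq_add_of_le hk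
  rw [Nat.add_sub_cancel_left]
  obtain ⟨strip, hstrip, hcard⟩ := exists_strips_card_le (Fin k → Bool) hs
  have hT : ∀ a, strip a ∈ range (2 ^ k / s + 1) := by simpa using hstrip
  have hf : (empty : Circuit (k + m)).ExtendsWithin _ (·.Provides f) :=
    (extendsWithin_false hn empty).bind fun c₁ _ h₁ =>
    (extendsWithin_minterms h₁ (Fin.castAdd m)).bind fun c₂ h₁₂ h₂ =>
    (extendsWithin_minterms (h₁.mono h₁₂) (Fin.natAdd k)).bind fun c₃ h₂₃ h₃ =>
    (extendsWithin_forall (range (2 ^ k / s + 1)) _ _ fun t _ c' h₃' =>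
      extendsWithin_strip (F := fun a b => f (Fin.append a b)) (hcard t)
        (h₁.mono (h₁₂.trans (h₂₃.trans h₃'))) (fun a => (h₂ a).mono (h₂₃.trans h₃'))
        fun b => (h₃ b).mono h₃').bind fun c₄ h₃₄ h₄ =>
    (extendsWithin_any (h₁.mono (h₁₂.trans (h₂₃.trans h₃₄))) _ _ h₄).congr fun x => by
      rw [Bool.eq_iff_iff]
      simp only [decide_eq_true_eq]
      rw [exists_stripPattern_iff hT]
      exact iff_of_eq (congrArg (f · = true) Fin.append_castAdd_natAdd)
  obtain ⟨c, -, hsize, hc⟩ := hf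
  obtain ⟨C, hC, hCsize⟩ := hc.exists_computes
  refine ⟨C, hC, ?_⟩
  simp only [empty, sum_const, card_range, smul_eq_mul, Fintype.card_fun, Fintype.card_bool,
    Fintype.card_fin] at hsize
  unfold lupanovOverhead
  nlinarith

end Circuit

lemma lupanovOverhead_mul_le {n L : ℕ} (hnL : n ≤ 2 ^ L) (hLn : 2 ^ L ≤ 2 * n) (h8L : 8 * L < n)
    (hpoly : 19 * n ^ 8 ≤ 2 ^ n) :
    lupanovOverhead (4 * L) (n - 4 * L) (n - 8 * L) * n ^ 3 ≤ 73 * 2 ^ n := by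
  obtain ⟨s, rfl⟩ := Nat.exists_eq_add_of_le h8L.le
  rw [show 8 * L + s - 4 * L = 4 * L + s by omega, Nat.add_sub_cancel_left]
  set n := 8 * L + s
  have hn : 1 ≤ n := by omega
  have hk : n ^ 4 ≤ 2 ^ (4 * L) := by rw [pow_mul']; exact Nat.pow_le_pow_left hnL 4
  have hk' : 2 ^ (4 * L) ≤ 16 * n ^ 4 := by
    rw [pow_mul']; exact (Nat.pow_le_pow_left hLn 4).trans_eq (by ring)
  have h8 : n ^ 8 ≤ 2 ^ (8 * L) := by rw [pow_mul']; exact Nat.pow_le_pow_left hnL 8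
  have hkm : 2 ^ (4 * L) * 2 ^ (4 * L + s) = 2 ^ n := by rw [← pow_add]; congr 1; omega
  have hLs : 2 ^ (8 * L) * 2 ^ s = 2 ^ n := by rw [← pow_add]
  have t₁ : ((2 * (4 * L) + 1) * 2 ^ (4 * L) + 3) * n ^ 3 ≤ 2 ^ n :=
    calc ((2 * (4 * L) + 1) * 2 ^ (4 * L) + 3) * n ^ 3
          ≤ (n * (16 * n ^ 4) + 3 * n ^ 5) * n ^ 3 := by
          gcongr
          · omega
          · nlinarith [Nat.one_le_pow 5 n hn]
      _ = 19 * n ^ 8 := by ring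
      _ ≤ 2 ^ n := hpoly
  have t₂ : (2 * (4 * L + s) + 2) * 2 ^ (4 * L + s) * n ^ 3 ≤ 4 * 2 ^ n :=
    calc (2 * (4 * L + s) + 2) * 2 ^ (4 * L + s) * n ^ 3 ≤ 4 * n * 2 ^ (4 * L + s) * n ^ 3 := by
          gcongr; omega
      _ = 4 * (n ^ 4 * 2 ^ (4 * L + s)) := by ring
      _ ≤ 4 * 2 ^ n := by rw [← hkm]; gcongr
  have t₃ : (2 ^ (4 * L) / s + 1) * (2 ^ s * (s + 2) + 1) * n ^ 3 ≤ 68 * 2 ^ n := by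
    have h₁ : 2 ^ (4 * L) / s + 1 ≤ 17 * n ^ 4 := by
      have := Nat.div_le_self (2 ^ (4 * L)) s
      nlinarith [Nat.one_le_pow 4 n hn]
    have h₂ : 2 ^ s * (s + 2) + 1 ≤ 4 * n * 2 ^ s := by
      have : s + 3 ≤ 4 * n := by omega
      nlinarith [Nat.one_le_two_pow (n := s)]
    calc (2 ^ (4 * L) / s + 1) * (2 ^ s * (s + 2) + 1) * n ^ 3
          ≤ 17 * n ^ 4 * (4 * n * 2 ^ s) * n ^ 3 := by gcongr
      _ = 68 * (n ^ 8 * 2 ^ s) := by ring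
      _ ≤ 68 * 2 ^ n := by rw [← hLs]; gcongr
  calc lupanovOverhead (4 * L) (4 * L + s) s * n ^ 3
        = ((2 * (4 * L) + 1) * 2 ^ (4 * L) + 3) * n ^ 3
          + (2 * (4 * L + s) + 2) * 2 ^ (4 * L + s) * n ^ 3
          + (2 ^ (4 * L) / s + 1) * (2 ^ s * (s + 2) + 1) * n ^ 3 := by
        unfold lupanovOverhead; ring
    _ ≤ 73 * 2 ^ n := by omega

lemma lupanov_size_le {ε : ℝ} {n L : ℕ} (hnL : n ≤ 2 ^ L) (hLn : 2 ^ L ≤ 2 * n)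
    (h8L : 8 * L < n) (hL : (n : ℝ) ≤ (1 + ε / 2) * (n - 8 * L : ℕ)) (hpoly : 19 * n ^ 8 ≤ 2 ^ n)
    (hεn : 146 ≤ ε * n ^ 2) :
    ((2 ^ (4 * L) / (n - 8 * L) * 2 ^ (n - 4 * L) + lupanovOverhead (4 * L) (n - 4 * L) (n - 8 * L)
      : ℕ) : ℝ) ≤ (1 + ε) * 2 ^ n / n := by
  set M := 2 ^ (4 * L) / (n - 8 * L) * 2 ^ (n - 4 * L)
  set O := lupanovOverhead (4 * L) (n - 4 * L) (n - 8 * L)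
  have hn : (0 : ℝ) < n := by exact_mod_cast (Nat.zero_lt_of_lt h8L)
  have hε : 0 < ε := by nlinarith [sq_nonneg (n : ℝ)]
  have hM : M * (n - 8 * L) ≤ 2 ^ n :=
    calc M * (n - 8 * L) = 2 ^ (4 * L) / (n - 8 * L) * (n - 8 * L) * 2 ^ (n - 4 * L) := by ring
      _ ≤ 2 ^ (4 * L) * 2 ^ (n - 4 * L) := by gcongr; exact Nat.div_mul_le_self _ _
      _ = 2 ^ n := by rw [← pow_add]; congr 1; omega
  have hMR : (M : ℝ) * n ≤ (1 + ε / 2) * 2 ^ n :=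
    calc (M : ℝ) * n ≤ M * ((1 + ε / 2) * (n - 8 * L : ℕ)) := by gcongr
      _ = (1 + ε / 2) * ((M * (n - 8 * L) : ℕ) : ℝ) := by push_cast; ring
      _ ≤ (1 + ε / 2) * 2 ^ n := by
        gcongr
        exact_mod_cast hM
  have hOR : (O : ℝ) * n ≤ ε / 2 * 2 ^ n := by
    have hO : (O : ℝ) * n ^ 3 ≤ 73 * 2 ^ n := by
      exact_mod_cast lupanovOverhead_mul_le hnL hLn h8L hpoly
    refine le_of_mul_le_mul_right ?_ (by positivity : (0 : ℝ) < n ^ 2)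
    nlinarith [(by positivity : (0 : ℝ) ≤ 2 ^ n)]
  rw [le_div_iff₀ hn]
  push_cast
  linarith

section Asymptotics

open Filter

lemma eventually_log_add_one_le {δ : ℝ} (hδ : 0 < δ) :
    ∀ᶠ n : ℕ in atTop, ((Nat.log 2 n + 1 : ℕ) : ℝ) ≤ δ * n := by
  have hlogb : ∀ᶠ x : ℝ in atTop, Real.logb 2 x ≤ δ / 2 * x := by
    filter_upwards [Real.isLittleO_logb_id_atTop.bound (half_pos hδ), eventually_ge_atTop 1]
      with x hx hx1
    rwa [Real.norm_of_nonneg (Real.logb_nonneg one_lt_two hx1), id,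
      Real.norm_of_nonneg (by linarith)] at hx
  have hone : ∀ᶠ x : ℝ in atTop, 1 ≤ δ / 2 * x :=
    (tendsto_id.const_mul_atTop (half_pos hδ)).eventually_ge_atTop 1
  filter_upwards [tendsto_natCast_atTop_atTop.eventually (hlogb.and hone)] with n hn
  have := Real.natLog_le_logb n 2
  push_cast at this ⊢
  linarith [hn.1, hn.2]

lemma eventually_mul_pow_le_two_pow (C d : ℕ) : ∀ᶠ n : ℕ in atTop, C * n ^ d ≤ 2 ^ n := by
  filter_upwards [(isLittleO_pow_const_const_pow_of_one_lt (R := ℝ) d one_lt_two).bound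
    (inv_pos.2 (by positivity : (0 : ℝ) < C + 1))] with n hn
  rw [Real.norm_of_nonneg (by positivity), Real.norm_of_nonneg (by positivity), inv_mul_eq_div,
    le_div_iff₀ (by positivity)] at hn
  exact_mod_cast (by nlinarith [(by positivity : (0 : ℝ) ≤ n ^ d)] : (C : ℝ) * n ^ d ≤ 2 ^ n)

lemma eventually_exists_lupanov_size_le {ε : ℝ} (hε : 0 < ε) :
    ∀ᶠ n : ℕ in atTop, ∃ k s : ℕ, k ≤ n ∧ 0 < s ∧
      ((2 ^ k / s * 2 ^ (n - k) + lupanovOverhead k (n - k) s : ℕ) : ℝ) ≤ (1 + ε) * 2 ^ n / n := by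
  filter_upwards [eventually_log_add_one_le (δ := ε / (8 * (2 + ε))) (by positivity),
    eventually_mul_pow_le_two_pow 19 8,
    tendsto_natCast_atTop_atTop.eventually_ge_atTop (146 / ε), eventually_gt_atTop 0]
    with n hL hpoly hεn hn
  set L := Nat.log 2 n + 1
  have hL' : 8 * L * (2 + ε) ≤ ε * n := by
    rw [div_mul_eq_mul_div, le_div_iff₀ (by positivity)] at hL
    linarith
  have h8L : 8 * L < n := by
    have hn' : (0 : ℝ) < n := by exact_mod_cast hn
    exact_mod_cast (by nlinarith : (8 * L : ℝ) < n)
  refine ⟨4 * L, n - 8 * L, by omega, by omega, lupanov_size_le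
    (Nat.lt_pow_succ_log_self one_lt_two n).le ?_ h8L ?_ hpoly ?_⟩
  · rw [pow_succ, mul_comm]
    exact Nat.mul_le_mul_left 2 (Nat.pow_log_le_self 2 hn.ne')
  · rw [Nat.cast_sub h8L.le]
    push_cast
    nlinarith
  · rw [div_le_iff₀ hε] at hεn
    have : (1 : ℝ) ≤ n := by exact_mod_cast hn
    nlinarith

end Asymptotics

theorem stmt_12 (ε : ℝ) (hε : 0 < ε) :
    ∃ N : ℕ, ∀ n : ℕ, N ≤ n → ∀ f : (Fin n → Bool) → Bool,
      ∃ C : Circuit n, C.Computes f ∧ (C.size : ℝ) ≤ (1 + ε) * 2 ^ n / n := by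
  obtain ⟨N, hN⟩ := Filter.eventually_atTop.mp
    ((Filter.eventually_gt_atTop 0).and (eventually_exists_lupanov_size_le hε))
  refine ⟨N, fun n hn f => ?_⟩
  obtain ⟨hn₀, k, s, hk, hs, hbound⟩ := hN n hn
  obtain ⟨C, hC, hsize⟩ := Circuit.exists_computes_size_le hk hs hn₀ f
  exact ⟨C, hC, (Nat.cast_le.mpr hsize).trans hbound⟩
end
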